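/- Let s > 0 with s not a positive integer, set ν = s − [s] ∈ (0,1), and let u be a Schwartz function on ℝ. Then the exact identity ∫_0^∞ ρ^{2s−1} |φ_{[s],0}(u, ρ)| dρ = 4^{−(s+1)} ( ∫_ℝ |z|^{2ν−1}/(1+z²) dz ) · ‖u‖²_{Ḣ^s(ℝ)} holds. -/

import Mathlib

/-!
Up to the sign `(-1)^L`, `φ_{L,0}(u, ρ)` is a nonnegative integral against `|û|²`, so once it is
multiplied by `ρ^{2s-1}` the order of integration can be swapped and `ρ` integrated first. For fixed
`ζ ≠ 0` the substitution `ρ = |ζ| z / 2` gives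
`∫₀^∞ ρ^{2ν-1} / (ζ² + 4ρ²) dρ = 2^{-2ν} |ζ|^{2ν-2} ∫₀^∞ z^{2ν-1} / (1 + z²) dz`,
which turns the weight `ζ^{2L+2}` into `|ζ|^{2s}`. The `z`-integral converges because `0 < ν < 1`,
and Fubini applies because `û` is again a Schwartz function, so `|ζ|^{2s} |û|²` is integrable.
-/

open MeasureTheory Complex

/-- The Fourier transform with normalization `û(ζ) = (2π)^{-1/2} ∫ e^{ixζ} u(x) dx`. -/
noncomputable def FT (u : ℝ → ℂ) (ζ : ℝ) : ℂ :=
  (Real.sqrt (2 * Real.pi) : ℂ)⁻¹ * ∫ x : ℝ, Complex.exp (Complex.I * x * ζ) * u x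

/-- The squared homogeneous Sobolev seminorm `‖u‖²_{Ḣ^s} = ∫ |ζ|^{2s} |û(ζ)|² dζ`. -/
noncomputable def homSobNormSq (s : ℝ) (u : ℝ → ℂ) : ℝ :=
  ∫ ζ : ℝ, |ζ| ^ (2 * s) * ‖FT u ζ‖ ^ 2

/-- `φ_{L,0}(u,ρ) = ((−1)^L/(2^{2L+1}ρ^{2L})) ∫ ζ^{2L+2}|û(ζ)|²/(ζ²+4ρ²) dζ`. -/
noncomputable def phiL0 (L : ℕ) (u : ℝ → ℂ) (ρ : ℝ) : ℝ :=
  ((-1 : ℝ) ^ L / (2 ^ (2 * L + 1) * ρ ^ (2 * L)))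
    * ∫ ζ : ℝ, ζ ^ (2 * L + 2) * ‖FT u ζ‖ ^ 2 / (ζ ^ 2 + 4 * ρ ^ 2)

open Real Set
open scoped SchwartzMap FourierTransform

lemma FT_eq_fourier (u : ℝ → ℂ) (ζ : ℝ) :
    FT u ζ = (√(2 * π) : ℂ)⁻¹ * 𝓕 u (-(2 * π)⁻¹ * ζ) := by
  rw [Real.fourier_real_eq_integral_exp_smul, FT]
  congr 2 with x
  rw [smul_eq_mul]
  congr 2
  push_cast
  field_simp

lemma exists_schwartzMap_FT_eq (u : 𝓢(ℝ, ℂ)) : ∃ v : 𝓢(ℝ, ℂ), FT u = v := by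
  let dilation : ℝ ≃L[ℝ] ℝ := ContinuousLinearEquiv.unitsEquivAut ℝ
    (Units.mk0 (-(2 * π)⁻¹) (by simp [pi_ne_zero]))
  refine ⟨(√(2 * π) : ℂ)⁻¹ • SchwartzMap.compCLMOfContinuousLinearEquiv ℂ dilation (𝓕 u), ?_⟩
  ext ζ
  simp [FT_eq_fourier, dilation, SchwartzMap.fourier_coe, mul_comm ζ]

lemma SchwartzMap.integrable_rpow_mul_norm_sq {D V : Type*} [NormedAddCommGroup D]
    [NormedSpace ℝ D] [MeasurableSpace D] [BorelSpace D] [SecondCountableTopology D]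
    {μ : Measure D} [μ.HasTemperateGrowth] [NormedAddCommGroup V] [NormedSpace ℝ V]
    (v : 𝓢(D, V)) {r : ℝ} (hr : 0 ≤ r) :
    Integrable (fun x ↦ ‖x‖ ^ r * ‖v x‖ ^ 2) μ := by
  set k := ⌈r⌉₊
  have hmajorant : Integrable (fun x ↦ ‖v x‖ + ‖x‖ ^ k * ‖v x‖) μ :=
    v.integrable.norm.add (v.integrable_pow_mul μ k)
  refine (hmajorant.const_mul (SchwartzMap.seminorm ℝ 0 0 v)).mono' (by fun_prop) ?_
  refine .of_forall fun x ↦ ?_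
  have hpow : ‖x‖ ^ r ≤ 1 + ‖x‖ ^ k := by
    rcases le_total ‖x‖ 1 with hx | hx
    · linarith [rpow_le_one (norm_nonneg x) hx hr, pow_nonneg (norm_nonneg x) k]
    · calc ‖x‖ ^ r ≤ ‖x‖ ^ (k : ℝ) := rpow_le_rpow_of_exponent_le hx (Nat.le_ceil r)
        _ ≤ 1 + ‖x‖ ^ k := by rw [rpow_natCast]; linarith
  have hv := SchwartzMap.norm_le_seminorm ℝ v x
  rw [norm_of_nonneg (by positivity)]
  calc ‖x‖ ^ r * ‖v x‖ ^ 2 ≤ (1 + ‖x‖ ^ k) * ‖v x‖ * SchwartzMap.seminorm ℝ 0 0 v := by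
        rw [sq, ← mul_assoc]; gcongr
    _ = _ := by ring

lemma rpow_div_sq_add_four_mul_sq_eq {q ζ ρ : ℝ} (hζ : ζ ≠ 0) (hρ : 0 ≤ ρ) :
    ρ ^ q / (ζ ^ 2 + 4 * ρ ^ 2)
      = (|ζ| / 2) ^ q / (4 * (|ζ| / 2) ^ 2)
        * (((|ζ| / 2)⁻¹ * ρ) ^ q / (1 + ((|ζ| / 2)⁻¹ * ρ) ^ 2)) := by
  set a := |ζ| / 2
  have ha : 0 < a := by positivity
  have hζa : ζ ^ 2 = 4 * a ^ 2 := by rw [← sq_abs]; ring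
  conv_lhs => rw [← mul_inv_cancel_left₀ ha.ne' ρ, mul_rpow ha.le (by positivity)]
  rw [hζa]
  field_simp

lemma integrableOn_Ioi_rpow_div_sq_add_four_mul_sq {q ζ : ℝ} (hζ : ζ ≠ 0)
    (hq : IntegrableOn (fun z : ℝ ↦ z ^ q / (1 + z ^ 2)) (Ioi 0)) :
    IntegrableOn (fun ρ : ℝ ↦ ρ ^ q / (ζ ^ 2 + 4 * ρ ^ 2)) (Ioi 0) := by
  have hscaled := (integrableOn_Ioi_comp_mul_left_iff (fun z : ℝ ↦ z ^ q / (1 + z ^ 2)) 0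
    (inv_pos.2 (by positivity : 0 < |ζ| / 2))).2 (by rwa [mul_zero])
  exact IntegrableOn.congr_fun (hscaled.const_mul _)
    (fun ρ hρ ↦ (rpow_div_sq_add_four_mul_sq_eq hζ (le_of_lt hρ)).symm) measurableSet_Ioi

lemma integral_Ioi_rpow_div_sq_add_four_mul_sq (q : ℝ) {ζ : ℝ} (hζ : ζ ≠ 0) :
    ∫ ρ in Ioi 0, ρ ^ q / (ζ ^ 2 + 4 * ρ ^ 2)
      = 2 ^ (-(q + 1)) * |ζ| ^ (q - 1) * ∫ z in Ioi 0, z ^ q / (1 + z ^ 2) := by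
  have ha : 0 < |ζ| / 2 := by positivity
  rw [setIntegral_congr_fun measurableSet_Ioi
      (fun ρ hρ ↦ rpow_div_sq_add_four_mul_sq_eq hζ (le_of_lt hρ)), integral_const_mul,
    integral_comp_mul_left_Ioi (fun z : ℝ ↦ z ^ q / (1 + z ^ 2)) 0 (inv_pos.2 ha), mul_zero,
    inv_inv, smul_eq_mul, ← mul_assoc]
  congr 1
  have habs : 0 < |ζ| := abs_pos.2 hζ
  rw [div_rpow habs.le zero_le_two, rpow_neg zero_le_two, rpow_add_one two_ne_zero,
    rpow_sub_one habs.ne']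
  field_simp
  norm_num

lemma integrableOn_Ioi_rpow_div_one_add_sq {q : ℝ} (hq₀ : -1 < q) (hq₁ : q < 1) :
    IntegrableOn (fun z : ℝ ↦ z ^ q / (1 + z ^ 2)) (Ioi 0) := by
  have hmeas : AEStronglyMeasurable (fun z : ℝ ↦ z ^ q / (1 + z ^ 2)) :=
    (by fun_prop : Measurable fun z : ℝ ↦ z ^ q / (1 + z ^ 2)).aestronglyMeasurable
  rw [← Ioc_union_Ioi_eq_Ioi zero_le_one]
  refine IntegrableOn.union ?_ ?_
  · have hnear : IntegrableOn (fun z : ℝ ↦ z ^ q) (Ioc 0 1) :=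
      (intervalIntegrable_iff_integrableOn_Ioc_of_le zero_le_one).1
        (intervalIntegral.intervalIntegrable_rpow' hq₀)
    refine hnear.mono' hmeas.restrict ((ae_restrict_iff' measurableSet_Ioc).2 (.of_forall ?_))
    intro z hz
    have hzq : 0 ≤ z ^ q := rpow_nonneg hz.1.le q
    rw [norm_of_nonneg (by positivity)]
    exact div_le_self hzq (by nlinarith)
  · have hfar : IntegrableOn (fun z : ℝ ↦ z ^ (q - 2)) (Ioi 1) :=
      (integrableOn_Ioi_rpow_iff zero_lt_one).2 (by linarith)
    refine hfar.mono' hmeas.restrict ((ae_restrict_iff' measurableSet_Ioi).2 (.of_forall ?_))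
    intro z (hz : 1 < z)
    have hz0 : 0 < z := one_pos.trans hz
    rw [norm_of_nonneg (by positivity), rpow_sub hz0, rpow_two]
    exact div_le_div_of_nonneg_left (by positivity) (by positivity) (by linarith)

lemma integral_abs_rpow_div_one_add_sq (q : ℝ) :
    ∫ z : ℝ, |z| ^ q / (1 + z ^ 2) = 2 * ∫ z in Ioi 0, z ^ q / (1 + z ^ 2) := by
  rw [← integral_comp_abs (f := fun z : ℝ ↦ z ^ q / (1 + z ^ 2))]
  simp only [sq_abs]

theorem integral_integral_swap_of_nonneg {α β : Type*} [MeasurableSpace α] [MeasurableSpace β]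
    {μ : Measure α} {ν : Measure β} [SFinite μ] [SFinite ν] {f : α → β → ℝ}
    (hf : AEStronglyMeasurable (Function.uncurry f) (μ.prod ν)) (hf₀ : ∀ᵐ x ∂μ, ∀ y, 0 ≤ f x y)
    (h_int : ∀ᵐ y ∂ν, Integrable (f · y) μ) (h_int' : Integrable (fun y ↦ ∫ x, f x y ∂μ) ν) :
    ∫ x, ∫ y, f x y ∂ν ∂μ = ∫ y, ∫ x, f x y ∂μ ∂ν := by
  refine integral_integral_swap ((integrable_prod_iff' hf).2 ⟨h_int, h_int'.congr ?_⟩)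
  refine .of_forall fun y ↦ integral_congr_ae (hf₀.mono fun x hx ↦ ?_)
  exact (norm_of_nonneg (hx y)).symm

theorem integral_Ioi_rpow_mul_integral_div_sq_add_four_mul_sq {g : ℝ → ℝ} (hg : Measurable g)
    (hg₀ : ∀ ζ, 0 ≤ g ζ) {s : ℝ} {L : ℕ} (hLs : (L : ℝ) < s) (hsL : s < L + 1)
    (hint : Integrable fun ζ ↦ |ζ| ^ (2 * s) * g ζ) :
    ∫ ρ in Ioi 0, ρ ^ (2 * (s - L) - 1) * ∫ ζ, ζ ^ (2 * L + 2) * g ζ / (ζ ^ 2 + 4 * ρ ^ 2)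
      = 2 ^ (-(2 * (s - L))) * (∫ z in Ioi 0, z ^ (2 * (s - L) - 1) / (1 + z ^ 2))
        * ∫ ζ, |ζ| ^ (2 * s) * g ζ := by
  set q := 2 * (s - L) - 1
  set C : ℝ := 2 ^ (-(2 * (s - L))) * ∫ z in Ioi 0, z ^ q / (1 + z ^ 2)
  have heven : Even (2 * L + 2) := ⟨L + 1, by ring⟩
  have hsplit : ∀ ρ ζ, ρ ^ q * (ζ ^ (2 * L + 2) * g ζ / (ζ ^ 2 + 4 * ρ ^ 2))
      = ζ ^ (2 * L + 2) * g ζ * (ρ ^ q / (ζ ^ 2 + 4 * ρ ^ 2)) := fun ρ ζ ↦ by ring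
  have hkernel : ∀ ζ ≠ 0, ∫ ρ in Ioi 0, ρ ^ q * (ζ ^ (2 * L + 2) * g ζ / (ζ ^ 2 + 4 * ρ ^ 2))
      = C * (|ζ| ^ (2 * s) * g ζ) := fun ζ hζ ↦ by
    simp_rw [hsplit, integral_const_mul, integral_Ioi_rpow_div_sq_add_four_mul_sq q hζ]
    have hpow : ζ ^ (2 * L + 2) * |ζ| ^ (q - 1) = |ζ| ^ (2 * s) := by
      rw [← heven.pow_abs, ← rpow_natCast, ← rpow_add (abs_pos.2 hζ)]
      congr 1
      push_cast
      ring
    have hexp : -(q + 1) = -(2 * (s - L)) := by ring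
    rw [← hpow, hexp]
    ring
  have hkernel_int : ∀ ζ ≠ 0, IntegrableOn
      (fun ρ ↦ ρ ^ q * (ζ ^ (2 * L + 2) * g ζ / (ζ ^ 2 + 4 * ρ ^ 2))) (Ioi 0) := fun ζ hζ ↦ by
    simp_rw [hsplit]
    exact ((integrableOn_Ioi_rpow_div_sq_add_four_mul_sq hζ
      (integrableOn_Ioi_rpow_div_one_add_sq (by linarith) (by linarith))).const_mul _)
  have hne : ∀ᵐ ζ : ℝ, ζ ≠ 0 := Measure.ae_ne volume 0
  calc ∫ ρ in Ioi 0, ρ ^ q * ∫ ζ, ζ ^ (2 * L + 2) * g ζ / (ζ ^ 2 + 4 * ρ ^ 2)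
      = ∫ ρ in Ioi 0, ∫ ζ, ρ ^ q * (ζ ^ (2 * L + 2) * g ζ / (ζ ^ 2 + 4 * ρ ^ 2)) := by
        simp_rw [integral_const_mul]
    _ = ∫ ζ, ∫ ρ in Ioi 0, ρ ^ q * (ζ ^ (2 * L + 2) * g ζ / (ζ ^ 2 + 4 * ρ ^ 2)) := by
        refine integral_integral_swap_of_nonneg (by fun_prop) ?_ (hne.mono hkernel_int)
          ((hint.const_mul C).congr (hne.mono fun ζ hζ ↦ (hkernel ζ hζ).symm))
        filter_upwards [ae_restrict_mem measurableSet_Ioi] with ρ (hρ : 0 < ρ) ζ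
        rw [hsplit]
        have := heven.pow_nonneg ζ
        have := hg₀ ζ
        have := rpow_nonneg hρ.le q
        positivity
    _ = ∫ ζ, C * (|ζ| ^ (2 * s) * g ζ) := integral_congr_ae (hne.mono hkernel)
    _ = C * ∫ ζ, |ζ| ^ (2 * s) * g ζ := integral_const_mul _ _

lemma abs_phiL0 (L : ℕ) (u : ℝ → ℂ) (ρ : ℝ) :
    |phiL0 L u ρ| = (2 ^ (2 * L + 1) * ρ ^ (2 * L))⁻¹
      * ∫ ζ, ζ ^ (2 * L + 2) * ‖FT u ζ‖ ^ 2 / (ζ ^ 2 + 4 * ρ ^ 2) := by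
  have hint : 0 ≤ ∫ ζ, ζ ^ (2 * L + 2) * ‖FT u ζ‖ ^ 2 / (ζ ^ 2 + 4 * ρ ^ 2) :=
    integral_nonneg fun ζ ↦ by
      have := (even_two_mul (L + 1)).pow_nonneg ζ
      positivity
  have := (even_two_mul L).pow_nonneg ρ
  rw [phiL0, abs_mul, abs_of_nonneg hint, abs_div, abs_pow, abs_neg, abs_one, one_pow,
    abs_of_nonneg (by positivity), one_div]

lemma rpow_mul_abs_phiL0 (s : ℝ) (L : ℕ) (u : ℝ → ℂ) {ρ : ℝ} (hρ : 0 < ρ) :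
    ρ ^ (2 * s - 1) * |phiL0 L u ρ| = (2 ^ (2 * L + 1))⁻¹ * (ρ ^ (2 * (s - L) - 1)
      * ∫ ζ, ζ ^ (2 * L + 2) * ‖FT u ζ‖ ^ 2 / (ζ ^ 2 + 4 * ρ ^ 2)) := by
  have hsplit : ρ ^ (2 * s - 1) = ρ ^ (2 * (s - L) - 1) * ρ ^ (2 * L) := by
    rw [← rpow_natCast, ← rpow_add hρ]
    push_cast
    ring_nf
  rw [abs_phiL0, hsplit]
  field_simp

lemma natCast_floor_lt_of_ne {s : ℝ} (hs : 0 < s) (hns : ∀ n : ℕ, 0 < n → s ≠ n) :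
    (⌊s⌋₊ : ℝ) < s := by
  rcases Nat.eq_zero_or_pos ⌊s⌋₊ with h0 | hpos
  · rwa [h0, Nat.cast_zero]
  · exact (Nat.floor_le hs.le).lt_of_ne (hns _ hpos).symm

/-- The exact identity
`∫_0^∞ ρ^{2s−1}|φ_{[s],0}(u,ρ)| dρ = 4^{−(s+1)} (∫ |z|^{2ν−1}/(1+z²) dz) ‖u‖²_{Ḣ^s}`
for noninteger `s > 0`, where `ν = s − [s]`. -/
theorem phiL0_exact_identity (s : ℝ) (hs : 0 < s) (hns : ∀ n : ℕ, 0 < n → s ≠ n)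
    (u : SchwartzMap ℝ ℂ) :
    (∫ ρ in Set.Ioi (0 : ℝ), ρ ^ (2 * s - 1) * |phiL0 ⌊s⌋₊ (⇑u) ρ|)
      = (4 : ℝ) ^ (-(s + 1))
        * (∫ z : ℝ, |z| ^ (2 * (s - ⌊s⌋₊) - 1) / (1 + z ^ 2))
        * homSobNormSq s (⇑u) := by
  have hLs := natCast_floor_lt_of_ne hs hns
  set L := ⌊s⌋₊
  have hconst : (2 ^ (2 * L + 1) : ℝ)⁻¹ * 2 ^ (-(2 * (s - L))) = 4 ^ (-(s + 1)) * 2 := by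
    rw [show (4 : ℝ) = 2 ^ (2 : ℝ) by norm_num, ← rpow_mul zero_le_two, ← rpow_natCast,
      ← rpow_neg zero_le_two, ← rpow_add two_pos, ← rpow_add_one two_ne_zero]
    congr 1
    push_cast
    ring
  obtain ⟨v, hv⟩ := exists_schwartzMap_FT_eq u
  have hint : Integrable fun ζ : ℝ ↦ |ζ| ^ (2 * s) * ‖v ζ‖ ^ 2 := by
    simpa only [norm_eq_abs] using v.integrable_rpow_mul_norm_sq (μ := volume) (by positivity)
  rw [setIntegral_congr_fun measurableSet_Ioi fun ρ hρ ↦ rpow_mul_abs_phiL0 s L u hρ,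
    integral_const_mul, homSobNormSq, hv,
    integral_Ioi_rpow_mul_integral_div_sq_add_four_mul_sq (by fun_prop) (fun _ ↦ sq_nonneg _)
      hLs (Nat.lt_floor_add_one s) hint,
    integral_abs_rpow_div_one_add_sq, ← mul_assoc, ← mul_assoc, hconst]
  ring
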